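/- Let Γ be a negative definite plumbing tree admitting an s-embedding φ, and suppose φ(v) = e_k (a single positive basis vector) for some vertex v. Then the framing of v equals −1 and the degree of v in Γ is at most 2; moreover, if e_k is of type 1 (appears with coefficient −1 in no vertex image), then Γ consists of the single vertex v. -/

import Mathlib

open Finset

/-- The `i`-th standard basis vector of `ℤ^N`. -/
def eVec {N : ℕ} (i : Fin N) : Fin N → ℤ := Pi.single i 1

/-- The pairing of the diagonal lattice `(ℤ^N, ⟨-1⟩^N)`:
`⟨e i, e j⟩ = -δᵢⱼ`. -/
def diagPair {N : ℕ} (x y : Fin N → ℤ) : ℤ := -(∑ i, x i * y i)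

/-- A plumbing graph: a finite set of vertices (a finite subset of `ℕ`), a symmetric
irreflexive adjacency relation supported on the vertices, and an integer framing
attached to each vertex. -/
structure Plumbing where
  verts : Finset ℕ
  adj : ℕ → ℕ → Bool
  adj_symm : ∀ u v, adj u v = adj v u
  adj_irrefl : ∀ v, adj v v = false
  adj_support : ∀ u v, adj u v = true → u ∈ verts ∧ v ∈ verts
  framing : ℕ → ℤ

namespace Plumbing

/-- The underlying simple graph of a plumbing graph. -/
def toSG (G : Plumbing) : SimpleGraph ℕ where
  Adj u v := G.adj u v = true
  symm := by
    constructor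
    intro u v h
    change G.adj u v = true at h
    change G.adj v u = true
    rw [G.adj_symm v u]
    exact h
  loopless := by
    constructor
    intro v h
    simp [G.adj_irrefl v] at h

/-- The entries of the intersection matrix `Q_Γ`:
`q v v` is the framing, `q u v = 1` if `u,v` adjacent, `0` otherwise. -/
def q (G : Plumbing) (u v : ℕ) : ℤ :=
  if u = v then G.framing u else if G.adj u v = true then 1 else 0

/-- The intersection form `Q_Γ` on `ℤ^{V(Γ)}`; vectors are represented as functions
`ℕ → ℤ` (only the values on the vertices matter). -/
def QF (G : Plumbing) (x y : ℕ → ℤ) : ℤ :=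
  ∑ u ∈ G.verts, ∑ v ∈ G.verts, x u * y v * G.q u v

/-- The plumbing graph is a forest (acyclic). -/
def IsForest (G : Plumbing) : Prop := G.toSG.IsAcyclic

/-- The subset `S` of vertices induces a connected subgraph: any two of its
vertices are joined by a walk staying inside `S`. -/
def ConnOn (G : Plumbing) (S : Finset ℕ) : Prop :=
  ∀ u ∈ S, ∀ v ∈ S, ∃ p : G.toSG.Walk u v, ∀ x ∈ p.support, x ∈ S

/-- The plumbing graph is a tree: acyclic and connected. -/
def IsTree (G : Plumbing) : Prop := G.IsForest ∧ G.ConnOn G.verts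

/-- The intersection form is negative definite. -/
def NegDef (G : Plumbing) : Prop :=
  ∀ x : ℕ → ℤ, (∃ v ∈ G.verts, x v ≠ 0) → G.QF x x < 0

/-- The intersection form is negative semidefinite. -/
def NegSemiDef (G : Plumbing) : Prop := ∀ x : ℕ → ℤ, G.QF x x ≤ 0

/-- The degree (valency) of a vertex. -/
def degree (G : Plumbing) (v : ℕ) : ℕ :=
  (G.verts.filter fun u => G.adj v u = true).card

/-- An s-embedding of a plumbing graph into the diagonal lattice `ℤ^N`:
an injective form-preserving linear map (recorded by the images `φ v` of
the vertices) such that the sum of the images of the vertices of every nonempty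
connected subgraph has the form `e_γ - ∑_{j ∈ I} e_j` with `γ ∉ I`. -/
structure IsSEmb (G : Plumbing) {N : ℕ} (φ : ℕ → Fin N → ℤ) : Prop where
  pairing : ∀ u ∈ G.verts, ∀ v ∈ G.verts, diagPair (φ u) (φ v) = G.q u v
  indep : LinearIndependent ℤ (fun v : {x // x ∈ G.verts} => φ v.val)
  subgraphSum : ∀ S : Finset ℕ, S ⊆ G.verts → S.Nonempty → G.ConnOn S →
    ∃ (γ : Fin N) (I : Finset (Fin N)), γ ∉ I ∧
      (∑ v ∈ S, φ v) = eVec γ - ∑ j ∈ I, eVec j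

/-- A p-embedding of a plumbing graph into the diagonal lattice `ℤ^N`:
an injective form-preserving linear map such that the sum of the images of the
vertices of every nonempty connected subgraph has the form `e_γ - ∑_{j ∈ I} e_j`
with `γ ∉ I`, or the form `-∑_{j ∈ I} e_j`. -/
structure IsPEmb (G : Plumbing) {N : ℕ} (φ : ℕ → Fin N → ℤ) : Prop where
  pairing : ∀ u ∈ G.verts, ∀ v ∈ G.verts, diagPair (φ u) (φ v) = G.q u v
  indep : LinearIndependent ℤ (fun v : {x // x ∈ G.verts} => φ v.val)
  subgraphSum : ∀ S : Finset ℕ, S ⊆ G.verts → S.Nonempty → G.ConnOn S →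
    (∃ (γ : Fin N) (I : Finset (Fin N)), γ ∉ I ∧
      (∑ v ∈ S, φ v) = eVec γ - ∑ j ∈ I, eVec j) ∨
    (∃ I : Finset (Fin N), (∑ v ∈ S, φ v) = -(∑ j ∈ I, eVec j))

/-- The number of vertices `v` such that `e k` appears with coefficient `+1` in `φ v`. -/
def posCount (G : Plumbing) {N : ℕ} (φ : ℕ → Fin N → ℤ) (k : Fin N) : ℕ :=
  (G.verts.filter fun v => φ v k = 1).card

/-- The number of vertices `v` such that `e k` appears with coefficient `-1` in `φ v`. -/
def negCount (G : Plumbing) {N : ℕ} (φ : ℕ → Fin N → ℤ) (k : Fin N) : ℕ :=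
  (G.verts.filter fun v => φ v k = -1).card

/-- `e k` is of type 1: coefficient `+1` in exactly one vertex image, `-1` in none. -/
def IsType1 (G : Plumbing) {N : ℕ} (φ : ℕ → Fin N → ℤ) (k : Fin N) : Prop :=
  posCount G φ k = 1 ∧ negCount G φ k = 0

/-- `e k` is of type 2: coefficient `-1` in exactly one vertex image, `+1` in none. -/
def IsType2 (G : Plumbing) {N : ℕ} (φ : ℕ → Fin N → ℤ) (k : Fin N) : Prop :=
  posCount G φ k = 0 ∧ negCount G φ k = 1

/-- `e k` is of type 3: coefficient `+1` in exactly one vertex image, `-1` in exactly one. -/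
def IsType3 (G : Plumbing) {N : ℕ} (φ : ℕ → Fin N → ℤ) (k : Fin N) : Prop :=
  posCount G φ k = 1 ∧ negCount G φ k = 1

/-- `e k` is of type 4: coefficient `+1` in exactly one vertex image, `-1` in exactly two. -/
def IsType4 (G : Plumbing) {N : ℕ} (φ : ℕ → Fin N → ℤ) (k : Fin N) : Prop :=
  posCount G φ k = 1 ∧ negCount G φ k = 2

/-- `G'` is the vertex blowup of `G` at the vertex `v`, with new vertex `b`:
`b` is a new `(-1)`-framed leaf joined to `v`, and the framing of `v` drops by 1. -/
structure VertexBlowup (G G' : Plumbing) (v b : ℕ) : Prop where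
  v_mem : v ∈ G.verts
  b_new : b ∉ G.verts
  verts_eq : G'.verts = insert b G.verts
  adj_iff : ∀ x y, (G'.adj x y = true) ↔
    (G.adj x y = true ∨ (x = v ∧ y = b) ∨ (x = b ∧ y = v))
  framing_v : G'.framing v = G.framing v - 1
  framing_b : G'.framing b = -1
  framing_other : ∀ x ∈ G.verts, x ≠ v → G'.framing x = G.framing x

/-- `G'` is the edge blowup of `G` at the edge `(u,w)`, with new vertex `b`:
the edge `(u,w)` is replaced by a new `(-1)`-framed vertex `b` joined to both
`u` and `w`, whose framings each drop by 1. -/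
structure EdgeBlowup (G G' : Plumbing) (u w b : ℕ) : Prop where
  edge : G.adj u w = true
  b_new : b ∉ G.verts
  verts_eq : G'.verts = insert b G.verts
  adj_iff : ∀ x y, (G'.adj x y = true) ↔
    ((G.adj x y = true ∧ ¬((x = u ∧ y = w) ∨ (x = w ∧ y = u))) ∨
     (x = b ∧ (y = u ∨ y = w)) ∨ (y = b ∧ (x = u ∨ x = w)))
  framing_u : G'.framing u = G.framing u - 1
  framing_w : G'.framing w = G.framing w - 1
  framing_b : G'.framing b = -1
  framing_other : ∀ x ∈ G.verts, x ≠ u → x ≠ w → G'.framing x = G.framing x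

/-- `G'` is obtained from `G` by a single blowup (at a vertex or at an edge). -/
def BlowupStep (G G' : Plumbing) : Prop :=
  (∃ v b, VertexBlowup G G' v b) ∨ (∃ u w b, EdgeBlowup G G' u w b)

/-- `G` blows down to `Δ`: `Δ` is obtained from `G` by a finite sequence of
blowdowns, equivalently `G` is obtained from `Δ` by a finite sequence of blowups. -/
def BlowsDownTo (G Δ : Plumbing) : Prop :=
  Relation.ReflTransGen (fun X Y : Plumbing => BlowupStep Y X) G Δ

/-- `G'` is obtained from `G` by blowing down the vertex `v`,
i.e. `G` is a one-step blowup of `G'` whose new vertex is `v`. -/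
def BlowdownAt (G G' : Plumbing) (v : ℕ) : Prop :=
  (∃ u, VertexBlowup G' G u v) ∨ (∃ u w, EdgeBlowup G' G u w v)

/-- The empty plumbing graph. -/
def IsEmptyGraph (G : Plumbing) : Prop := G.verts = ∅

/-- `G` blows down to the empty graph. -/
def BlowsDownToEmpty (G : Plumbing) : Prop :=
  ∃ E : Plumbing, E.IsEmptyGraph ∧ BlowsDownTo G E

/-- A single-vertex plumbing graph with framing `0`. -/
def IsZeroVertexGraph (G : Plumbing) : Prop :=
  ∃ v, G.verts = {v} ∧ G.framing v = 0

/-- `G` blows down to the single-vertex graph with framing `0`. -/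
def BlowsDownToZeroVertex (G : Plumbing) : Prop :=
  ∃ Z : Plumbing, Z.IsZeroVertexGraph ∧ BlowsDownTo G Z

/-- `G` is an induced subgraph of `H` with the same framings. -/
def IsInducedSubgraph (G H : Plumbing) : Prop :=
  G.verts ⊆ H.verts ∧
  (∀ u ∈ G.verts, ∀ v ∈ G.verts, G.adj u v = H.adj u v) ∧
  (∀ v ∈ G.verts, G.framing v = H.framing v)

/-- `G` is sandwiched: it is an induced subgraph (with the same framings) of a
plumbing graph that blows down to the empty graph. -/
def Sandwiched (G : Plumbing) : Prop :=
  ∃ H : Plumbing, BlowsDownToEmpty H ∧ IsInducedSubgraph G H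

/-- `G` is a planar multilink (pm) graph: it is an induced subgraph (with the same
framings) of a negative semidefinite plumbing graph that blows down to the
single-vertex graph with framing `0`. -/
def IsPM (G : Plumbing) : Prop :=
  ∃ H : Plumbing, H.NegSemiDef ∧ BlowsDownToZeroVertex H ∧ IsInducedSubgraph G H

/-- `H` is obtained from `G` by attaching finitely many new leaves with framing `-1`
to vertices of `G`. -/
def AugmentedByLeaves (G H : Plumbing) : Prop :=
  IsInducedSubgraph G H ∧
  ∀ x ∈ H.verts, x ∉ G.verts →
    H.framing x = -1 ∧ ∃ v ∈ G.verts, ∀ y, (H.adj x y = true ↔ y = v)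

/-- `H` is obtained from `G` by attaching a single new leaf `l` with framing `fr`
to the vertex `v`. -/
structure AttachLeaf (G H : Plumbing) (v l : ℕ) (fr : ℤ) : Prop where
  v_mem : v ∈ G.verts
  l_new : l ∉ G.verts
  verts_eq : H.verts = insert l G.verts
  adj_iff : ∀ x y, (H.adj x y = true) ↔
    (G.adj x y = true ∨ (x = v ∧ y = l) ∨ (x = l ∧ y = v))
  framing_l : H.framing l = fr
  framing_other : ∀ x ∈ G.verts, H.framing x = G.framing x

/-- The plumbing graph obtained from `G` by decreasing the framing of `v` by `1`,
keeping all other framings and all edges. -/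
def decFraming (G : Plumbing) (v : ℕ) : Plumbing :=
  { G with framing := Function.update G.framing v (G.framing v - 1) }

/-- The plumbing graph obtained from `G` by increasing the framing of `v` by `1`,
keeping all other framings and all edges. -/
def incFraming (G : Plumbing) (v : ℕ) : Plumbing :=
  { G with framing := Function.update G.framing v (G.framing v + 1) }

/-- Membership in the Lipman cone `𝒮(Γ)`: all coordinates positive and
`Q_Γ(D, v) ≤ 0` for every vertex `v`. -/
def InLipman (G : Plumbing) (r : ℕ → ℤ) : Prop :=
  (∀ v ∈ G.verts, 0 < r v) ∧
  (∀ v ∈ G.verts, (∑ u ∈ G.verts, r u * G.q u v) ≤ 0)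

end Plumbing

open Plumbing

/-- STATEMENT 5: if a vertex `v` of a negative definite plumbing tree with an
s-embedding satisfies `φ v = e k`, then `v` has framing `-1` and degree at most 2;
moreover, if `e k` is of type 1 then the tree consists of the single vertex `v`. -/
theorem stmt5_single_basis {N : ℕ} (G : Plumbing) (hTree : G.IsTree)
    (hNeg : G.NegDef) (φ : ℕ → Fin N → ℤ) (hφ : G.IsSEmb φ)
    (v : ℕ) (hv : v ∈ G.verts) (k : Fin N) (hvk : φ v = eVec k) :
    G.framing v = -1 ∧ G.degree v ≤ 2 ∧ (IsType1 G φ k → G.verts = {v}) := by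
  classical
  have hpairk : ∀ x : Fin N → ℤ, diagPair x (eVec k) = -(x k) := by
    intro x
    simp [diagPair, eVec, Pi.single_apply, mul_ite]
  -- framing
  have hfr : G.framing v = -1 := by
    have h := hφ.pairing v hv v hv
    rw [hvk, hpairk] at h
    simp [Plumbing.q, eVec, Pi.single_apply] at h
    omega
  -- neighbors have coefficient -1 at k
  have hnb : ∀ u ∈ G.verts, G.adj v u = true → φ u k = -1 := by
    intro u hu hadj
    have hne : u ≠ v := by
      intro he
      subst he
      rw [G.adj_irrefl] at hadj
      simp at hadj
    have h := hφ.pairing u hu v hv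
    rw [hvk, hpairk] at h
    have hq : G.q u v = 1 := by
      rw [Plumbing.q, if_neg hne, if_pos]
      rw [G.adj_symm]
      exact hadj
    rw [hq] at h
    omega
  -- degree bound
  have hdeg : G.degree v ≤ 2 := by
    by_contra hgt
    push_neg at hgt
    have h3 : 3 ≤ (G.verts.filter fun u => G.adj v u = true).card := hgt
    obtain ⟨T, hTsub, hTcard⟩ := Finset.exists_subset_card_eq h3
    obtain ⟨a, b, c, hab, hac, hbc, hT⟩ := Finset.card_eq_three.mp hTcard
    have haF : a ∈ G.verts.filter fun u => G.adj v u = true := hTsub (by rw [hT]; simp)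
    have hbF : b ∈ G.verts.filter fun u => G.adj v u = true := hTsub (by rw [hT]; simp)
    have hcF : c ∈ G.verts.filter fun u => G.adj v u = true := hTsub (by rw [hT]; simp)
    obtain ⟨haV, haA⟩ := Finset.mem_filter.mp haF
    obtain ⟨hbV, hbA⟩ := Finset.mem_filter.mp hbF
    obtain ⟨hcV, hcA⟩ := Finset.mem_filter.mp hcF
    have hva : v ≠ a := by rintro rfl; rw [G.adj_irrefl] at haA; simp at haA
    have hvb : v ≠ b := by rintro rfl; rw [G.adj_irrefl] at hbA; simp at hbA
    have hvc : v ≠ c := by rintro rfl; rw [G.adj_irrefl] at hcA; simp at hcA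
    set S : Finset ℕ := insert v {a, b, c} with hSdef
    have hSsub : S ⊆ G.verts := by
      intro x hx
      rcases Finset.mem_insert.mp hx with rfl | hx
      · exact hv
      · rcases Finset.mem_insert.mp hx with rfl | hx
        · exact haV
        · rcases Finset.mem_insert.mp hx with rfl | hx
          · exact hbV
          · rw [Finset.mem_singleton] at hx; subst hx; exact hcV
    have mkw : ∀ x ∈ S, ∃ p : G.toSG.Walk v x, ∀ y ∈ p.support, y ∈ S := by
      intro x hx
      rcases Finset.mem_insert.mp hx with rfl | hx'
      · refine ⟨SimpleGraph.Walk.nil, ?_⟩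
        intro y hy
        simp only [SimpleGraph.Walk.support_nil, List.mem_singleton] at hy
        subst hy
        exact Finset.mem_insert_self _ _
      · have hxA : G.adj v x = true := by
          rcases Finset.mem_insert.mp hx' with rfl | hx''
          · exact haA
          · rcases Finset.mem_insert.mp hx'' with rfl | hx'''
            · exact hbA
            · rw [Finset.mem_singleton] at hx'''; subst hx'''; exact hcA
        refine ⟨SimpleGraph.Walk.cons hxA SimpleGraph.Walk.nil, ?_⟩
        intro y hy
        change y ∈ [v, x] at hy
        simp only [SimpleGraph.Walk.support_cons, SimpleGraph.Walk.support_nil,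
          List.mem_cons, List.mem_singleton] at hy
        rcases hy with rfl | hy
        · exact Finset.mem_insert_self _ _
        · simp at hy; subst hy; exact hx
    have hconn : G.ConnOn S := by
      intro u1 h1 u2 h2
      obtain ⟨p1, hp1⟩ := mkw u1 h1
      obtain ⟨p2, hp2⟩ := mkw u2 h2
      refine ⟨p1.reverse.append p2, ?_⟩
      intro y hy
      rw [SimpleGraph.Walk.mem_support_append_iff] at hy
      rcases hy with hy | hy
      · exact hp1 y (by rwa [SimpleGraph.Walk.support_reverse, List.mem_reverse] at hy)
      · exact hp2 y hy
    obtain ⟨γ, I, hγI, hsum⟩ :=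
      hφ.subgraphSum S hSsub ⟨v, Finset.mem_insert_self _ _⟩ hconn
    have heq := congrFun hsum k
    have hL : (∑ w ∈ S, φ w) k = -2 := by
      rw [Finset.sum_apply]
      have h1 : v ∉ ({a, b, c} : Finset ℕ) := by simp [hva, hvb, hvc]
      have h2 : a ∉ ({b, c} : Finset ℕ) := by simp [hab, hac]
      have h3 : b ∉ ({c} : Finset ℕ) := by simp [hbc]
      rw [hSdef, Finset.sum_insert h1, Finset.sum_insert h2, Finset.sum_insert h3,
        Finset.sum_singleton, hvk, hnb a haV haA, hnb b hbV hbA, hnb c hcV hcA]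
      simp [eVec, Pi.single_apply]
    rw [hL] at heq
    have hR : (eVec γ - ∑ j ∈ I, eVec j) k
        = (if k = γ then (1:ℤ) else 0) - (if k ∈ I then 1 else 0) := by
      simp [eVec, Pi.single_apply, Finset.sum_apply, Finset.sum_ite_eq]
    rw [hR] at heq
    split_ifs at heq <;> omega
  refine ⟨hfr, hdeg, ?_⟩
  intro ht
  have hno : ∀ u ∈ G.verts, φ u k ≠ -1 := by
    intro u hu hneg
    have h0 := ht.2
    have hpos : 0 < negCount G φ k := by
      rw [Plumbing.negCount]
      exact Finset.card_pos.mpr ⟨u, Finset.mem_filter.mpr ⟨hu, hneg⟩⟩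
    omega
  ext u
  simp only [Finset.mem_singleton]
  constructor
  · intro hu
    by_contra hne
    obtain ⟨p, -⟩ := hTree.2 v hv u hu
    cases p with
    | nil => exact hne rfl
    | cons h q =>
      rename_i w
      have hadj : G.adj v w = true := h
      have hwV : w ∈ G.verts := (G.adj_support v w hadj).2
      exact hno w hwV (hnb w hwV hadj)
  · intro h
    subst h
    exact hv
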